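/- Let x, x* : [0,∞) → ℝⁿ be absolutely continuous, with x* being ℓ-Lipschitz. If ⟨x'(t), x(t) - x*(t)⟩ ≤ -a‖x(t) - x*(t)‖² holds for almost every t ≥ 0 with a > 0, then limsup_{t→∞} ‖x(t) - x*(t)‖ ≤ ℓ/a; moreover, if ‖x(0) - x*(0)‖ ≤ ℓ/a then ‖x(t) - x*(t)‖ ≤ ℓ/a for all t ≥ 0. -/

import Mathlib

/-!
The distance `r t = ‖x t - x* t‖` is absolutely continuous. At almost every `t`, both `x` and
`x*` are differentiable (the latter by Rademacher's theorem, with `‖x*'‖ ≤ ℓ`); there, if `r ≠ 0`,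
then `r r' = ⟪x' - x*', x - x*⟫ ≤ -a r² + ℓ r`, and if `r = 0` then `r` is minimal, so `r' = 0`.
Hence `r' ≤ ℓ - a r` almost everywhere, and the Grönwall inequality for absolutely continuous
functions gives `r t ≤ ℓ / a + (r 0 - ℓ / a) e^{-a t}`, which implies both claims.
-/

open MeasureTheory Set Filter
open scoped Topology RealInnerProductSpace NNReal

namespace AbsolutelyContinuousOnInterval

variable {X Y : Type*} [PseudoMetricSpace X] [PseudoMetricSpace Y] {a b : ℝ}

theorem of_dist_le {f : ℝ → X} {g : ℝ → Y} (hg : AbsolutelyContinuousOnInterval g a b)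
    (hfg : ∀ s ∈ uIcc a b, ∀ t ∈ uIcc a b, dist (f s) (f t) ≤ dist (g s) (g t)) :
    AbsolutelyContinuousOnInterval f a b := by
  refine squeeze_zero' (Eventually.of_forall fun _ ↦ Finset.sum_nonneg fun _ _ ↦ dist_nonneg)
    ?_ hg
  filter_upwards [eventually_inf_principal.mpr (Eventually.of_forall fun _ h ↦ h)] with E hE
  exact Finset.sum_le_sum fun i hi ↦ hfg _ (hE.1 i hi).1 _ (hE.1 i hi).2

theorem norm {E : Type*} [SeminormedAddCommGroup E] {f : ℝ → E}
    (hf : AbsolutelyContinuousOnInterval f a b) :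
    AbsolutelyContinuousOnInterval (fun t ↦ ‖f t‖) a b :=
  hf.of_dist_le fun _ _ _ _ ↦ (dist_norm_norm_le _ _).trans_eq (dist_eq_norm _ _).symm

theorem of_eq_add_integral {E : Type*} [NormedAddCommGroup E] [NormedSpace ℝ E]
    {x x' : ℝ → E} (hx' : IntervalIntegrable x' volume a b)
    (hx : ∀ t ∈ uIcc a b, x t = x a + ∫ τ in a..t, x' τ) :
    AbsolutelyContinuousOnInterval x a b := by
  refine (hx'.norm.absolutelyContinuousOnInterval_intervalIntegral left_mem_uIcc).of_dist_le
    fun s hs t ht ↦ ?_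
  have hxs : IntervalIntegrable x' volume a s := hx'.mono_set (uIcc_subset_uIcc_left hs)
  have hxt : IntervalIntegrable x' volume a t := hx'.mono_set (uIcc_subset_uIcc_left ht)
  rw [dist_eq_norm, hx s hs, hx t ht, add_sub_add_left_eq_sub,
    intervalIntegral.integral_interval_sub_left hxs hxt, Real.dist_eq,
    intervalIntegral.integral_interval_sub_left hxs.norm hxt.norm]
  exact intervalIntegral.norm_integral_le_abs_integral_norm

theorem le_of_ae_deriv_nonpos {f : ℝ → ℝ} (hf : AbsolutelyContinuousOnInterval f a b)
    (hab : a ≤ b) (hf' : ∀ᵐ t ∂volume.restrict (Ioo a b), deriv f t ≤ 0) : f b ≤ f a := by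
  have hnonneg : 0 ≤ ∫ t in a..b, -deriv f t := by
    refine intervalIntegral.integral_nonneg_of_ae_restrict hab ?_
    rw [← Measure.restrict_congr_set Ioo_ae_eq_Icc]
    filter_upwards [hf'] with t ht
    simpa using ht
  rw [intervalIntegral.integral_neg, hf.integral_deriv_eq_sub] at hnonneg
  linarith

end AbsolutelyContinuousOnInterval

theorem contDiff_gronwallBound {k : WithTop ℕ∞} (δ K ε : ℝ) :
    ContDiff ℝ k (gronwallBound δ K ε) := by
  rcases eq_or_ne K 0 with rfl | hK
  · rw [gronwallBound_K0]; fun_prop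
  · rw [gronwallBound_of_K_ne_0 hK]; fun_prop

theorem gronwallBound_neg_eq {a : ℝ} (ha : a ≠ 0) (δ ε t : ℝ) :
    gronwallBound δ (-a) ε t = ε / a + (δ - ε / a) * Real.exp (-a * t) := by
  rw [gronwallBound_of_K_ne_0 (neg_ne_zero.2 ha)]
  field_simp
  ring

theorem gronwallBound_neg_le {a δ ε : ℝ} (ha : a ≠ 0) (hδ : δ ≤ ε / a) (t : ℝ) :
    gronwallBound δ (-a) ε t ≤ ε / a := by
  rw [gronwallBound_neg_eq ha]
  nlinarith [Real.exp_pos (-a * t)]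

theorem tendsto_gronwallBound_neg_atTop {a : ℝ} (ha : 0 < a) (δ ε : ℝ) :
    Tendsto (gronwallBound δ (-a) ε) atTop (𝓝 (ε / a)) := by
  have hexp : Tendsto (fun t ↦ Real.exp (-a * t)) atTop (𝓝 0) :=
    Real.tendsto_exp_atBot.comp (tendsto_id.const_mul_atTop_of_neg (neg_lt_zero.2 ha))
  simpa [funext (gronwallBound_neg_eq ha.ne' δ ε)] using
    (hexp.const_mul (δ - ε / a)).const_add (ε / a)

theorem AbsolutelyContinuousOnInterval.le_gronwallBound_of_ae_deriv_le {f : ℝ → ℝ}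
    {a b K ε : ℝ} (hf : AbsolutelyContinuousOnInterval f a b) (hab : a ≤ b)
    (hf' : ∀ᵐ t ∂volume.restrict (Ioo a b), deriv f t ≤ K * f t + ε) :
    f b ≤ gronwallBound (f a) K ε (b - a) := by
  set B := fun t ↦ gronwallBound (f a) K ε (t - a)
  set g := fun t ↦ Real.exp (-K * t) * (f t - B t)
  have hB : ContDiff ℝ 1 B := (contDiff_gronwallBound _ _ _).comp (contDiff_id.sub contDiff_const)
  have hg : AbsolutelyContinuousOnInterval g a b :=
    (Real.contDiff_exp.comp (contDiff_const.mul contDiff_id)).contDiffOn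
      |>.absolutelyContinuousOnInterval |>.mul (hf.sub hB.contDiffOn.absolutelyContinuousOnInterval)
  have hg' : ∀ᵐ t ∂volume.restrict (Ioo a b), deriv g t ≤ 0 := by
    filter_upwards [hf', ae_restrict_of_ae hf.ae_differentiableAt,
      ae_restrict_mem measurableSet_Ioo] with t hbound hdiff ht
    rw [uIcc_of_le hab] at hdiff
    have hderiv : HasDerivAt g (Real.exp (-K * t) * (deriv f t - (K * f t + ε))) t :=
      (((hasDerivAt_id t).const_mul (-K)).exp.mul ((hdiff (Ioo_subset_Icc_self ht)).hasDerivAt.sub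
        (hasDerivAt_gronwallBound_shift (f a) K ε t a))).congr_deriv
        (by simp only [id, Pi.sub_apply]; ring)
    rw [hderiv.deriv]
    exact mul_nonpos_of_nonneg_of_nonpos (Real.exp_pos _).le (by linarith)
  have hgab := hg.le_of_ae_deriv_nonpos hab hg'
  simp only [g, B, sub_self, gronwallBound_x0, mul_zero] at hgab
  exact sub_nonpos.1 (nonpos_of_mul_nonpos_right hgab (Real.exp_pos _))

section InnerProductSpace

variable {E : Type*} [NormedAddCommGroup E] [InnerProductSpace ℝ E]

theorem deriv_norm_sub_le_of_inner_le {x y : ℝ → E} {x' y' : E} {t a ℓ : ℝ}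
    (hx : HasDerivAt x x' t) (hy : HasDerivAt y y' t) (hy' : ‖y'‖ ≤ ℓ)
    (hxy : ⟪x', x t - y t⟫ ≤ -a * ‖x t - y t‖ ^ 2) :
    deriv (fun τ ↦ ‖x τ - y τ‖) t ≤ ℓ - a * ‖x t - y t‖ := by
  have he : HasDerivAt (fun τ ↦ x τ - y τ) (x' - y') t := hx.sub hy
  by_cases h0 : x t - y t = 0
  · have hmin : IsLocalMin (fun τ ↦ ‖x τ - y τ‖) t :=
      Eventually.of_forall fun τ ↦ by simp [h0]
    rw [hmin.deriv_eq_zero, h0, norm_zero, mul_zero, sub_zero]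
    exact (norm_nonneg _).trans hy'
  · have hr : 0 < ‖x t - y t‖ := norm_pos_iff.2 h0
    -- differentiate `‖x - y‖ ^ 2` in two ways
    have hid := ((he.differentiableAt.norm ℝ h0).hasDerivAt.pow 2).unique he.norm_sq
    have hy'e : -⟪y', x t - y t⟫ ≤ ℓ * ‖x t - y t‖ :=
      (neg_le_abs _).trans ((abs_real_inner_le_norm _ _).trans (by gcongr))
    rw [inner_sub_right, real_inner_comm, real_inner_comm y', Nat.cast_ofNat, pow_one] at hid
    refine le_of_mul_le_mul_left ?_ hr
    linarith

theorem ae_deriv_norm_sub_le [FiniteDimensional ℝ E] {x x' y : ℝ → E} {s : Set ℝ} {a : ℝ}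
    {K : ℝ≥0} (hs : IsOpen s) (hy : LipschitzOnWith K y s)
    (hx : ∀ᵐ t ∂volume.restrict s, HasDerivAt x (x' t) t)
    (hxy : ∀ᵐ t ∂volume.restrict s, ⟪x' t, x t - y t⟫ ≤ -a * ‖x t - y t‖ ^ 2) :
    ∀ᵐ t ∂volume.restrict s, deriv (fun τ ↦ ‖x τ - y τ‖) t ≤ K - a * ‖x t - y t‖ := by
  filter_upwards [hx, hxy, hy.ae_differentiableWithinAt_real hs.measurableSet,
    ae_restrict_mem hs.measurableSet] with t hxt hxyt hyt hts
  have hyt' := (hyt.differentiableAt (hs.mem_nhds hts)).hasDerivAt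
  exact deriv_norm_sub_le_of_inner_le hxt hyt' (hyt'.le_of_lipschitzOn (hs.mem_nhds hts) hy) hxyt

end InnerProductSpace

theorem tracking_performance_general
    {n : ℕ} (x x' xstar : ℝ → EuclideanSpace ℝ (Fin n)) (a ℓ : ℝ)
    (ha : 0 < a) (hℓ : 0 ≤ ℓ)
    (hlip : ∀ s ∈ Set.Ici (0:ℝ), ∀ t ∈ Set.Ici (0:ℝ),
      ‖xstar t - xstar s‖ ≤ ℓ * |t - s|)
    (hint : ∀ T : ℝ, IntegrableOn x' (Set.Icc 0 T))
    (hftc : ∀ t ∈ Set.Ici (0:ℝ), x t = x 0 + ∫ τ in (0:ℝ)..t, x' τ)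
    (hderiv : ∀ᵐ t ∂(volume.restrict (Set.Ici (0:ℝ))), HasDerivAt x (x' t) t)
    (hineq : ∀ᵐ t ∂(volume.restrict (Set.Ici (0:ℝ))),
      inner ℝ (x' t) (x t - xstar t) ≤ -a * ‖x t - xstar t‖ ^ 2) :
    Filter.limsup (fun t => ‖x t - xstar t‖) Filter.atTop ≤ ℓ / a ∧
    (‖x 0 - xstar 0‖ ≤ ℓ / a → ∀ t, 0 ≤ t → ‖x t - xstar t‖ ≤ ℓ / a) := by
  have hL : LipschitzOnWith ℓ.toNNReal xstar (Ici 0) := LipschitzOnWith.of_dist_le_mul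
    fun t ht s hs ↦ by
      rw [dist_eq_norm, Real.dist_eq, Real.coe_toNNReal ℓ hℓ]; exact hlip s hs t ht
  rw [← Measure.restrict_congr_set Ioi_ae_eq_Ici] at hderiv hineq
  have hr' := ae_deriv_norm_sub_le isOpen_Ioi (hL.mono Ioi_subset_Ici_self) hderiv hineq
  have hbound : ∀ t, 0 ≤ t → ‖x t - xstar t‖ ≤ gronwallBound ‖x 0 - xstar 0‖ (-a) ℓ t := by
    intro t ht
    have hx := AbsolutelyContinuousOnInterval.of_eq_add_integral
      ((intervalIntegrable_iff_integrableOn_Icc_of_le ht).2 (hint t))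
      fun τ hτ ↦ hftc τ (uIcc_of_le ht ▸ hτ).1
    have hy := (hL.mono (uIcc_of_le ht ▸ Icc_subset_Ici_self)).absolutelyContinuousOnInterval
    simpa using (hx.fun_sub hy).norm.le_gronwallBound_of_ae_deriv_le ht
      ((ae_restrict_of_ae_restrict_of_subset Ioo_subset_Ioi_self hr').mono fun τ h ↦ by
        rw [Real.coe_toNNReal ℓ hℓ] at h; linarith)
  refine ⟨?_, fun h0 t ht ↦ (hbound t ht).trans (gronwallBound_neg_le ha.ne' h0 t)⟩
  have hB := tendsto_gronwallBound_neg_atTop ha ‖x 0 - xstar 0‖ ℓ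
  calc limsup (fun t ↦ ‖x t - xstar t‖) atTop
      ≤ limsup (gronwallBound ‖x 0 - xstar 0‖ (-a) ℓ) atTop :=
        limsup_le_limsup ((eventually_ge_atTop 0).mono hbound)
          (isCoboundedUnder_le_of_le atTop fun _ ↦ norm_nonneg _) hB.isBoundedUnder_le
    _ = ℓ / a := hB.limsup_eq

/-- Tracking bound: if `x` is absolutely continuous, `x*` is `ℓ`-Lipschitz on `[0,∞)`, and
`⟨x'(t), x(t) - x*(t)⟩ ≤ -a‖x(t) - x*(t)‖²` for a.e. `t ≥ 0` with `a > 0`, then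
`limsup_{t→∞} ‖x(t) - x*(t)‖ ≤ ℓ/a`; moreover, if `‖x(0) - x*(0)‖ ≤ ℓ/a`, then
`‖x(t) - x*(t)‖ ≤ ℓ/a` for all `t ≥ 0`. -/
theorem tracking_performance
    {n : ℕ} (x x' xstar : ℝ → EuclideanSpace ℝ (Fin n)) (a ℓ : ℝ)
    (ha : 0 < a) (hℓ : 0 ≤ ℓ)
    (hlip : ∀ s ∈ Set.Ici (0:ℝ), ∀ t ∈ Set.Ici (0:ℝ),
      ‖xstar t - xstar s‖ ≤ ℓ * |t - s|)
    (hcont : ContinuousOn x (Set.Ici 0))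
    (hint : ∀ T : ℝ, IntegrableOn x' (Set.Icc 0 T))
    (hftc : ∀ t ∈ Set.Ici (0:ℝ), x t = x 0 + ∫ τ in (0:ℝ)..t, x' τ)
    (hderiv : ∀ᵐ t ∂(volume.restrict (Set.Ici (0:ℝ))), HasDerivAt x (x' t) t)
    (hineq : ∀ᵐ t ∂(volume.restrict (Set.Ici (0:ℝ))),
      inner ℝ (x' t) (x t - xstar t) ≤ -a * ‖x t - xstar t‖ ^ 2) :
    Filter.limsup (fun t => ‖x t - xstar t‖) Filter.atTop ≤ ℓ / a ∧
    (‖x 0 - xstar 0‖ ≤ ℓ / a → ∀ t, 0 ≤ t → ‖x t - xstar t‖ ≤ ℓ / a) :=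
  tracking_performance_general x x' xstar a ℓ ha hℓ hlip hint hftc hderiv hineq
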